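/- Let R be a discrete valuation domain with prime element p and let λ be an ordinal of uncountable cofinality. For every ordinal α < λ let G_α be a reduced torsion R-module of length at most α. Then the direct sum G = ⊕_{α<λ} G_α is complete in the p^λ-adic topology, i.e., the canonical map G → lim_{σ<λ} G/p^σG is an isomorphism. -/

import Mathlib

universe u v w

open Ordinal

/-- The submodule `p^σ G`, defined by transfinite recursion. -/
noncomputable def pPow (R : Type u) [CommRing R] (p : R) (G : Type v) [AddCommGroup G]
    [Module R G] (σ : Ordinal.{w}) : Submodule R G :=
  Ordinal.limitRecOn σ ⊤ (fun _ N => N.map (LinearMap.lsmul R G p))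
    (fun o _ ih => ⨅ ρ : Set.Iio o, ih ρ.1 ρ.2)


/-- `G` is (Hausdorff and) complete in the `p^λ`-adic topology: the canonical map
`G → lim_{σ<λ} G/p^σ G` into the inverse limit is bijective. -/
def IsPLamComplete (R : Type u) [CommRing R] (p : R) (lam : Ordinal.{w}) (G : Type v)
    [AddCommGroup G] [Module R G] : Prop :=
  (∀ g : G, (∀ σ < lam, g ∈ pPow R p G σ) → g = 0) ∧
  ∀ x : (∀ σ : Set.Iio lam, G ⧸ pPow R p G σ.1),
    (∀ σ τ : Set.Iio lam, σ.1 ≤ τ.1 → ∀ g : G,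
      Submodule.Quotient.mk g = x τ → Submodule.Quotient.mk g = x σ) →
    ∃ g : G, ∀ σ : Set.Iio lam, Submodule.Quotient.mk g = x σ

/-!
Because `p^α G_α = 0`, the `α`-coordinate of an element of `p^σ G` vanishes as soon as `α < σ`.
So in a compatible family of lifts `(h σ)_{σ<λ}` the `α`-coordinate is constant from `σ = α + 1`
on, which defines the limit coordinatewise. It has finite support since `cf λ > ω`: a countable
set of coordinates is bounded by some `σ < λ`, and they all lie in the finite support of `h σ`.
-/

section pPow

variable {R : Type u} [CommRing R] (p : R) (G : Type v) [AddCommGroup G] [Module R G]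

lemma pPow_zero : pPow R p G (0 : Ordinal.{w}) = ⊤ :=
  Ordinal.limitRecOn_zero ..

lemma pPow_add_one (σ : Ordinal.{w}) :
    pPow R p G (σ + 1) = (pPow R p G σ).map (LinearMap.lsmul R G p) :=
  Ordinal.limitRecOn_add_one ..

lemma pPow_limit {σ : Ordinal.{w}} (h : Order.IsSuccLimit σ) :
    pPow R p G σ = ⨅ ρ : Set.Iio σ, pPow R p G ρ.1 :=
  Ordinal.limitRecOn_limit _ _ _ _ h

lemma pPow_add_one_le (σ : Ordinal.{w}) : pPow R p G (σ + 1) ≤ pPow R p G σ := by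
  rw [pPow_add_one]
  rintro _ ⟨y, hy, rfl⟩
  exact (pPow R p G σ).smul_mem p hy

variable {G} {H : Type*} [AddCommGroup H] [Module R H]

lemma map_pPow_le (f : G →ₗ[R] H) (σ : Ordinal.{w}) :
    (pPow R p G σ).map f ≤ pPow R p H σ := by
  induction σ using Ordinal.limitRecOn with
  | zero => rw [pPow_zero p H]; exact le_top
  | add_one σ ih =>
    rw [pPow_add_one, pPow_add_one]
    rintro _ ⟨_, ⟨y, hy, rfl⟩, rfl⟩
    exact ⟨f y, ih ⟨y, hy, rfl⟩, by simp⟩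
  | limit o ho ih =>
    rw [pPow_limit _ _ ho, pPow_limit _ _ ho]
    exact le_iInf fun ρ => (Submodule.map_mono (iInf_le _ ρ)).trans (ih ρ.1 ρ.2)

lemma map_mem_pPow (f : G →ₗ[R] H) {σ : Ordinal.{w}} {x : G} (hx : x ∈ pPow R p G σ) :
    f x ∈ pPow R p H σ :=
  map_pPow_le p f σ ⟨x, hx, rfl⟩

end pPow

section DirectSum

open DirectSum

variable {R : Type u} [CommRing R] (p : R) {ι : Type*} {G : ι → Type v}
  [∀ i, AddCommGroup (G i)] [∀ i, Module R (G i)]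

lemma mem_pPow_directSum_iff {σ : Ordinal.{w}} {g : ⨁ i, G i} :
    g ∈ pPow R p (⨁ i, G i) σ ↔ ∀ i, g i ∈ pPow R p (G i) σ := by
  classical
  refine ⟨fun hg i => map_mem_pPow p (DirectSum.component R ι G i) hg, fun hg => ?_⟩
  rw [← DirectSum.sum_support_of g]
  refine Submodule.sum_mem _ fun i _ => ?_
  rw [← DirectSum.lof_eq_of R]
  exact map_mem_pPow p (DirectSum.lof R ι G i) (hg i)

lemma directSum_apply_eq_zero_of_mem_pPow {σ : Ordinal.{w}} {i : ι}
    (hi : pPow R p (G i) σ = ⊥) {g : ⨁ i, G i} (hg : g ∈ pPow R p (⨁ i, G i) σ) : g i = 0 := by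
  simpa [hi] using (mem_pPow_directSum_iff p).1 hg i

end DirectSum

open Cardinal in
lemma Set.finite_of_forall_finite_inter_Iio {lam : Ordinal.{w}} (hcof : ℵ₀ < lam.cof)
    {S : Set (Set.Iio lam)} (hS : ∀ σ : Set.Iio lam, (S ∩ Set.Iio σ).Finite) : S.Finite := by
  by_contra hinf
  let e := Set.Infinite.natEmbedding S hinf
  have hsup : (⨆ n, ((e n : Set.Iio lam) : Ordinal) + 1) < lam :=
    lift_iSup_add_one_lt_of_lt_cof (by simpa using hcof) fun n => (e n).1.2
  refine (hS ⟨_, hsup⟩).not_infinite <| (Set.infinite_range_of_injective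
    (f := fun n => (e n : Set.Iio lam)) fun a b hab => e.injective (Subtype.ext hab)).mono ?_
  rintro _ ⟨n, rfl⟩
  exact ⟨(e n).2, (lt_add_one _).trans_le
    (Ordinal.le_iSup (fun n => ((e n : Set.Iio lam) : Ordinal) + 1) n)⟩

section Completeness

open DirectSum

variable {R : Type u} [CommRing R] (p : R) {lam : Ordinal.{w}} {G : Set.Iio lam → Type v}
  [∀ α, AddCommGroup (G α)] [∀ α, Module R (G α)]

lemma directSum_eq_zero_of_forall_mem_pPow (hlen : ∀ α : Set.Iio lam, pPow R p (G α) α.1 = ⊥)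
    {g : ⨁ α, G α} (hg : ∀ σ < lam, g ∈ pPow R p (⨁ α, G α) σ) : g = 0 :=
  DFinsupp.ext fun α => directSum_apply_eq_zero_of_mem_pPow p (hlen α) (hg α.1 α.2)

lemma exists_sub_mem_pPow_directSum (hcof : Cardinal.aleph0 < lam.cof)
    (hlen : ∀ α : Set.Iio lam, pPow R p (G α) α.1 = ⊥) (h : Set.Iio lam → ⨁ α, G α)
    (hh : ∀ σ τ : Set.Iio lam, σ ≤ τ → h τ - h σ ∈ pPow R p (⨁ α, G α) σ.1) :
    ∃ g : ⨁ α, G α, ∀ σ : Set.Iio lam, g - h σ ∈ pPow R p (⨁ α, G α) σ.1 := by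
  classical
  have hlim : Order.IsSuccLimit lam := one_lt_cof_iff.1 (Cardinal.one_lt_aleph0.trans hcof)
  let next (α : Set.Iio lam) : Set.Iio lam := ⟨α.1 + 1, hlim.add_one_lt α.2⟩
  have lt_next (α : Set.Iio lam) : α < next α := lt_add_one α.1
  have stable (σ α : Set.Iio lam) (hασ : α < σ) : h σ α = h (next α) α := by
    rw [← sub_eq_zero, ← DFinsupp.sub_apply]
    exact directSum_apply_eq_zero_of_mem_pPow p (hlen α)
      (pPow_add_one_le p _ _ (hh (next α) σ (Order.add_one_le_of_lt (α := Ordinal) hασ)))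
  have hfin : {α | h (next α) α ≠ 0}.Finite := by
    refine Set.finite_of_forall_finite_inter_Iio hcof fun σ => (h σ).support.finite_toSet.subset ?_
    rintro α ⟨hα, hασ⟩
    rw [Finset.mem_coe, DFinsupp.mem_support_iff, stable σ α hασ]
    exact hα
  let g : ⨁ α, G α := ⟨fun α => h (next α) α, Trunc.mk ⟨hfin.toFinset.1, fun α =>
    (em (h (next α) α = 0)).symm.imp_left hfin.mem_toFinset.2⟩⟩
  refine ⟨g, fun σ => (mem_pPow_directSum_iff p).2 fun α => ?_⟩
  have hg : (g - h σ) α = (h (max σ (next α)) - h σ) α := by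
    rw [DFinsupp.sub_apply, DFinsupp.sub_apply, stable _ α ((lt_next α).trans_le le_sup_right)]
    rfl
  rw [hg]
  exact (mem_pPow_directSum_iff p).1 (hh σ _ le_sup_left) α

end Completeness

open DirectSum in
theorem stmt8_general (R : Type u) [CommRing R] (p : R)
    (lam : Ordinal.{w}) (hcof : Cardinal.aleph0 < lam.cof)
    (Gfam : Set.Iio lam → Type v) [∀ α, AddCommGroup (Gfam α)] [∀ α, Module R (Gfam α)]
    (hlen : ∀ α : Set.Iio lam, pPow R p (Gfam α) α.1 = ⊥) :
    IsPLamComplete R p lam (⨁ α, Gfam α) := by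
  refine ⟨fun g hg => directSum_eq_zero_of_forall_mem_pPow p hlen hg, fun x hx => ?_⟩
  choose h hh using fun σ : Set.Iio lam => Submodule.Quotient.mk_surjective _ (x σ)
  obtain ⟨g, hg⟩ := exists_sub_mem_pPow_directSum p hcof hlen h fun σ τ hστ =>
    (Submodule.Quotient.eq _).1 ((hx σ τ hστ _ (hh τ)).trans (hh σ).symm)
  exact ⟨g, fun σ => (hh σ).symm ▸ (Submodule.Quotient.eq _).2 (hg σ)⟩

open DirectSum in
theorem stmt8 (R : Type u) [CommRing R] [IsDomain R] [IsDiscreteValuationRing R]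
    (p : R) (hp : Irreducible p)
    (lam : Ordinal.{w}) (hcof : Cardinal.aleph0 < lam.cof)
    (Gfam : Set.Iio lam → Type v) [∀ α, AddCommGroup (Gfam α)] [∀ α, Module R (Gfam α)]
    (htor : ∀ α, Module.IsTorsion R (Gfam α))
    (hlen : ∀ α : Set.Iio lam, pPow R p (Gfam α) α.1 = ⊥) :
    IsPLamComplete R p lam (⨁ α, Gfam α) :=
  stmt8_general R p lam hcof Gfam hlen
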